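/- Let X_1, X_2, Y_1, Y_2, A be pairwise disjoint finite sets of indeterminates with |X_1| = |Y_1| + |A| and |Y_2| = |X_2| + |A| (the case A = ∅ included). In the polynomial ring ℂ[X_1 ⊔ X_2 ⊔ Y_1 ⊔ Y_2 ⊔ A], let I be the ideal generated by {e_a(Y_1 ⊔ A) − e_a(X_1) : 1 ≤ a ≤ |X_1|} together with {e_b(Y_2) − e_b(X_2 ⊔ A) : 1 ≤ b ≤ |Y_2|}. Then e_j(X_1 ⊔ X_2) − e_j(Y_1 ⊔ Y_2) ∈ I for every j ≥ 1. (This is the single-crossing case of the claim that the relations e_j(⊔ incoming alphabets) = e_j(⊔ outgoing alphabets) hold in the ring 𝒱 attached to a braid diagram.) -/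

import Mathlib

/-! The generating polynomial `∏_{v ∈ U} (1 + v t)` of the `e_j(U)` is multiplicative over
disjoint unions, so `e_•(S ⊔ T)` is the convolution of `e_•(S)` and `e_•(T)` and congruences
modulo `I` pass through disjoint unions. Hence
`e(X₁ ⊔ X₂) ≡ e(Y₁ ⊔ A ⊔ X₂) = e(Y₁ ⊔ (X₂ ⊔ A)) ≡ e(Y₁ ⊔ Y₂)`. The generators of `I` stop at
degrees `|X₁|` and `|Y₂|`; the cardinality hypotheses make both sides vanish above that. -/

open MvPolynomial

set_option synthInstance.maxHeartbeats 400000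
set_option maxHeartbeats 1000000

noncomputable section

/-- The `j`-th elementary symmetric polynomial `e_j(U)` in the set of variables `U`,
with `e_0(U) = 1` and `e_j(U) = 0` for `j > |U|`. -/
def esymF {V : Type} [DecidableEq V] (U : Finset V) (j : ℕ) : MvPolynomial V ℂ :=
  ∑ t ∈ U.powersetCard j, ∏ v ∈ t, X v

/-- The variable set `X_1 ⊔ X_2 ⊔ Y_1 ⊔ Y_2 ⊔ A`. -/
abbrev V9 (n1 n2 m1 m2 c : ℕ) : Type := Fin n1 ⊕ Fin n2 ⊕ Fin m1 ⊕ Fin m2 ⊕ Fin c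

/-- The alphabet `X_1`. -/
def FX1 (n1 n2 m1 m2 c : ℕ) : Finset (V9 n1 n2 m1 m2 c) := Finset.univ.image Sum.inl

/-- The alphabet `X_2`. -/
def FX2 (n1 n2 m1 m2 c : ℕ) : Finset (V9 n1 n2 m1 m2 c) :=
  Finset.univ.image fun a : Fin n2 => Sum.inr (Sum.inl a)

/-- The alphabet `Y_1`. -/
def FY1 (n1 n2 m1 m2 c : ℕ) : Finset (V9 n1 n2 m1 m2 c) :=
  Finset.univ.image fun a : Fin m1 => Sum.inr (Sum.inr (Sum.inl a))

/-- The alphabet `Y_2`. -/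
def FY2 (n1 n2 m1 m2 c : ℕ) : Finset (V9 n1 n2 m1 m2 c) :=
  Finset.univ.image fun a : Fin m2 => Sum.inr (Sum.inr (Sum.inr (Sum.inl a)))

/-- The alphabet `A`. -/
def FA (n1 n2 m1 m2 c : ℕ) : Finset (V9 n1 n2 m1 m2 c) :=
  Finset.univ.image fun a : Fin c => Sum.inr (Sum.inr (Sum.inr (Sum.inr a)))

section ElementarySymmetric

open Finset

variable {V : Type} [DecidableEq V]

lemma esymF_zero (U : Finset V) : esymF U 0 = 1 := by
  simp [esymF]

lemma esymF_eq_zero_of_card_lt {U : Finset V} {j : ℕ} (h : #U < j) : esymF U j = 0 := by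
  rw [esymF, powersetCard_eq_empty.2 h, sum_empty]

lemma coeff_prod_one_add_C_X_mul_X (U : Finset V) (j : ℕ) :
    (∏ v ∈ U, (1 + Polynomial.C (X v) * Polynomial.X)).coeff j = esymF U j := by
  simp_rw [prod_one_add, prod_mul_distrib, ← map_prod, prod_const, Polynomial.finsetSum_coeff,
    Polynomial.coeff_C_mul_X_pow, esymF, powersetCard_eq_filter, sum_filter, eq_comm]

lemma esymF_union {s t : Finset V} (hst : Disjoint s t) (j : ℕ) :
    esymF (s ∪ t) j = ∑ p ∈ antidiagonal j, esymF s p.1 * esymF t p.2 := by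
  simp_rw [← coeff_prod_one_add_C_X_mul_X, prod_union hst, Polynomial.coeff_mul]

variable {I : Ideal (MvPolynomial V ℂ)}

lemma esymF_sub_mem_of_card_le {s t : Finset V} {n : ℕ} (hs : #s ≤ n) (ht : #t ≤ n)
    (h : ∀ a, 1 ≤ a → a ≤ n → esymF s a - esymF t a ∈ I) (a : ℕ) :
    esymF s a - esymF t a ∈ I := by
  rcases Nat.eq_zero_or_pos a with rfl | ha
  · simp [esymF_zero]
  by_cases han : a ≤ n
  · exact h a ha han
  · rw [esymF_eq_zero_of_card_lt (by omega), esymF_eq_zero_of_card_lt (by omega), sub_self]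
    exact I.zero_mem

lemma esymF_union_sub_mem {s s' t t' : Finset V} (hst : Disjoint s t) (hst' : Disjoint s' t')
    (hs : ∀ a, esymF s a - esymF s' a ∈ I) (ht : ∀ b, esymF t b - esymF t' b ∈ I) (j : ℕ) :
    esymF (s ∪ t) j - esymF (s' ∪ t') j ∈ I := by
  simp_rw [← Ideal.Quotient.eq] at hs ht ⊢
  simp_rw [esymF_union hst, esymF_union hst', map_sum, map_mul, hs, ht]

lemma esymF_crossing_sub_mem {X₁ X₂ Y₁ Y₂ A : Finset V} (hX : Disjoint X₁ X₂)
    (hY : Disjoint Y₁ Y₂) (hY₁X₂ : Disjoint Y₁ X₂) (hY₁A : Disjoint Y₁ A) (hX₂A : Disjoint X₂ A)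
    (h₁ : ∀ a, esymF (Y₁ ∪ A) a - esymF X₁ a ∈ I) (h₂ : ∀ b, esymF Y₂ b - esymF (X₂ ∪ A) b ∈ I)
    (j : ℕ) : esymF (X₁ ∪ X₂) j - esymF (Y₁ ∪ Y₂) j ∈ I := by
  have slide_A : esymF (X₁ ∪ X₂) j - esymF (Y₁ ∪ (X₂ ∪ A)) j ∈ I := by
    rw [union_comm X₂, ← union_assoc]
    exact esymF_union_sub_mem hX (disjoint_union_left.2 ⟨hY₁X₂, hX₂A.symm⟩)
      (fun a => sub_mem_comm_iff.1 (h₁ a)) (fun b => by simp) j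
  have replace_X₂A : esymF (Y₁ ∪ (X₂ ∪ A)) j - esymF (Y₁ ∪ Y₂) j ∈ I :=
    esymF_union_sub_mem (disjoint_union_right.2 ⟨hY₁X₂, hY₁A⟩) hY (fun a => by simp)
      (fun b => sub_mem_comm_iff.1 (h₂ b)) j
  simpa using add_mem slide_A replace_X₂A

end ElementarySymmetric

section Alphabets

open Finset

variable (n1 n2 m1 m2 c : ℕ)

lemma card_FX1 : #(FX1 n1 n2 m1 m2 c) = n1 := by
  simp [FX1, card_image_of_injective _ Sum.inl_injective]

lemma card_FX2 : #(FX2 n1 n2 m1 m2 c) = n2 := by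
  rw [FX2, card_image_of_injective _ (by intro a b; simp)]
  simp

lemma card_FY1 : #(FY1 n1 n2 m1 m2 c) = m1 := by
  rw [FY1, card_image_of_injective _ (by intro a b; simp)]
  simp

lemma card_FY2 : #(FY2 n1 n2 m1 m2 c) = m2 := by
  rw [FY2, card_image_of_injective _ (by intro a b; simp)]
  simp

lemma card_FA : #(FA n1 n2 m1 m2 c) = c := by
  rw [FA, card_image_of_injective _ (by intro a b; simp)]
  simp

end Alphabets

theorem statement9_general (n1 n2 m1 m2 c : ℕ) (h1 : n1 = m1 + c) (h2 : m2 = n2 + c)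
    (j : ℕ) :
    esymF (FX1 n1 n2 m1 m2 c ∪ FX2 n1 n2 m1 m2 c) j -
        esymF (FY1 n1 n2 m1 m2 c ∪ FY2 n1 n2 m1 m2 c) j ∈
      Ideal.span
        ({f | ∃ a : ℕ, 1 ≤ a ∧ a ≤ n1 ∧
            f = esymF (FY1 n1 n2 m1 m2 c ∪ FA n1 n2 m1 m2 c) a - esymF (FX1 n1 n2 m1 m2 c) a} ∪
          {f | ∃ b : ℕ, 1 ≤ b ∧ b ≤ m2 ∧
            f = esymF (FY2 n1 n2 m1 m2 c) b -
              esymF (FX2 n1 n2 m1 m2 c ∪ FA n1 n2 m1 m2 c) b}) := by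
  have hY₁A : Disjoint (FY1 n1 n2 m1 m2 c) (FA n1 n2 m1 m2 c) := by
    simp [Finset.disjoint_left, FY1, FA]
  have hX₂A : Disjoint (FX2 n1 n2 m1 m2 c) (FA n1 n2 m1 m2 c) := by
    simp [Finset.disjoint_left, FX2, FA]
  refine esymF_crossing_sub_mem (by simp [Finset.disjoint_left, FX1, FX2])
    (by simp [Finset.disjoint_left, FY1, FY2]) (by simp [Finset.disjoint_left, FY1, FX2])
    hY₁A hX₂A ?_ ?_ j
  · refine esymF_sub_mem_of_card_le (n := n1) ?_ (card_FX1 ..).le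
      fun a ha han => Ideal.subset_span (Or.inl ⟨a, ha, han, rfl⟩)
    rw [Finset.card_union_of_disjoint hY₁A, card_FY1, card_FA, h1]
  · refine esymF_sub_mem_of_card_le (n := m2) (card_FY2 ..).le ?_
      fun b hb hbm => Ideal.subset_span (Or.inr ⟨b, hb, hbm, rfl⟩)
    rw [Finset.card_union_of_disjoint hX₂A, card_FX2, card_FA, h2]

/-- With `|X_1| = |Y_1| + |A|` and `|Y_2| = |X_2| + |A|`, for the ideal `I`
generated by `{e_a(Y_1 ⊔ A) − e_a(X_1) : 1 ≤ a ≤ |X_1|}` and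
`{e_b(Y_2) − e_b(X_2 ⊔ A) : 1 ≤ b ≤ |Y_2|}`, one has
`e_j(X_1 ⊔ X_2) − e_j(Y_1 ⊔ Y_2) ∈ I` for every `j ≥ 1`. -/
theorem statement9 (n1 n2 m1 m2 c : ℕ) (h1 : n1 = m1 + c) (h2 : m2 = n2 + c)
    (j : ℕ) (hj : 1 ≤ j) :
    esymF (FX1 n1 n2 m1 m2 c ∪ FX2 n1 n2 m1 m2 c) j -
        esymF (FY1 n1 n2 m1 m2 c ∪ FY2 n1 n2 m1 m2 c) j ∈
      Ideal.span
        ({f | ∃ a : ℕ, 1 ≤ a ∧ a ≤ n1 ∧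
            f = esymF (FY1 n1 n2 m1 m2 c ∪ FA n1 n2 m1 m2 c) a - esymF (FX1 n1 n2 m1 m2 c) a} ∪
          {f | ∃ b : ℕ, 1 ≤ b ∧ b ≤ m2 ∧
            f = esymF (FY2 n1 n2 m1 m2 c) b -
              esymF (FX2 n1 n2 m1 m2 c ∪ FA n1 n2 m1 m2 c) b}) :=
  statement9_general n1 n2 m1 m2 c h1 h2 j
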